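/- Conversely: if Par_p(f_i) = [e_i,e_i'] with [e_i,e_i'] non-empty, then Past_p(e_i) = Past_p(f_i), Fut_p(e_i') = Fut_p(f_i), and for every process sequence 𝕡 (from p to q) with last_𝕡(f_i) defined, last_𝕡(f_i) ∉ [e_i,e_i'], and symmetrically for first_𝕡(f_i). -/

import Mathlib

/-- A message sequence chart (MSC) over processes `P`, labels `A`, and event set `E`. -/
structure MSC (P A E : Type) [Fintype E] where
  proc : E → P
  lbl : E → A
  pnext : E → E → Prop
  msg : E → E → Prop
  pnext_proc : ∀ {e f}, pnext e f → proc e = proc f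
  pnext_succ_unique : ∀ {e f f'}, pnext e f → pnext e f' → f = f'
  pnext_pred_unique : ∀ {e e' f}, pnext e f → pnext e' f → e = e'
  msg_proc : ∀ {e f}, msg e f → proc e ≠ proc f
  msg_send_unique : ∀ {e f f'}, msg e f → msg e f' → f = f'
  msg_recv_unique : ∀ {e e' f}, msg e f → msg e' f → e = e'
  msg_not_send_recv : ∀ {e f g}, msg e f → ¬ msg g e
  acyclic : ∀ e, ¬ Relation.TransGen (fun a b => pnext a b ∨ msg a b) e e
  proc_total : ∀ {e f}, proc e = proc f →
    Relation.ReflTransGen pnext e f ∨ Relation.ReflTransGen pnext f e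
  fifo : ∀ {e e' f f'}, msg e f → msg e' f' → proc e = proc e' → proc f = proc f' →
    (Relation.ReflTransGen pnext e e' ↔ Relation.ReflTransGen pnext f f')

namespace MSC

variable {P A E : Type} [Fintype E]

/-- The edge relation `→proc ∪ →msg`. -/
def edge (M : MSC P A E) (e f : E) : Prop := M.pnext e f ∨ M.msg e f

/-- The partial order `≤ = (→proc ∪ →msg)*`. -/
def le (M : MSC P A E) (e f : E) : Prop := Relation.ReflTransGen M.edge e f

/-- The strict order `< = (→proc ∪ →msg)⁺`. -/
def lt (M : MSC P A E) (e f : E) : Prop := Relation.TransGen M.edge e f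

/-- `e ∥ f`: incomparability w.r.t. `≤`. -/
def par (M : MSC P A E) (e f : E) : Prop := ¬ M.le e f ∧ ¬ M.le f e

/-- `e ⋖ f`: strict order minus the direct process/message edges. -/
def cless (M : MSC P A E) (e f : E) : Prop := M.lt e f ∧ ¬ M.pnext e f ∧ ¬ M.msg e f

/-- The (reflexive) order along a single process: `→proc*`. -/
def pord (M : MSC P A E) (e f : E) : Prop := Relation.ReflTransGen M.pnext e f

/-- `Past_p(f) = {g ∈ E_p : g < f}`. -/
def PastP (M : MSC P A E) (p : P) (f : E) : Set E := {g | M.proc g = p ∧ M.lt g f}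

/-- `Fut_p(f) = {g ∈ E_p : f < g}`. -/
def FutP (M : MSC P A E) (p : P) (f : E) : Set E := {g | M.proc g = p ∧ M.lt f g}

/-- `Par_p(f) = {g ∈ E_p : g ∥ f}`. -/
def ParP (M : MSC P A E) (p : P) (f : E) : Set E := {g | M.proc g = p ∧ M.par g f}

/-- `S` is an interval of consecutive events on process `p`. -/
def IsInterval (M : MSC P A E) (p : P) (S : Set E) : Prop :=
  (∀ e ∈ S, M.proc e = p) ∧
  ∀ e f g, e ∈ S → g ∈ S → M.pord e f → M.pord f g → f ∈ S

/-- The interval `[e,e'] = {g ∈ E_p : e ≤ g ≤ e'}` on process `p`. -/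
def Intv (M : MSC P A E) (p : P) (e e' : E) : Set E :=
  {g | M.proc g = p ∧ M.pord e g ∧ M.pord g e'}

end MSC

/-- `e ≤_𝕡 f` for a process sequence `𝕡`. -/
def MSC.leSeq {P A E : Type} [Fintype E] (M : MSC P A E) : List P → E → E → Prop
  | [], _, _ => False
  | [p], e, f => M.proc e = p ∧ M.pord e f
  | p :: ps, e, f => M.proc e = p ∧ ∃ g h, M.pord e g ∧ M.msg g h ∧ M.leSeq ps h f

/-!
The events of `E_p` are partitioned by `f` into its past, the events parallel to it, and its
future. If the parallel ones form the non-empty interval `[e, e']`, then an event of `E_p` before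
`e` cannot be parallel to `f`, and cannot lie above `f` since `e` does not; so it lies below `f`.
Symmetrically for events after `e'`. Finally `last_𝕡(f) ≤ f ≤ first_𝕡(f)`, so neither is parallel
to `f`, i.e. neither lies in `[e, e']`.
-/

namespace MSC

variable {P A E : Type} [Fintype E] (M : MSC P A E)

lemma le_of_pord {a b : E} (h : M.pord a b) : M.le a b :=
  Relation.ReflTransGen.mono (fun _ _ => Or.inl) a b h

lemma le_of_lt {a b : E} (h : M.lt a b) : M.le a b :=
  h.to_reflTransGen

lemma lt_of_le_of_ne {a b : E} (h : M.le a b) (hne : a ≠ b) : M.lt a b :=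
  (Relation.reflTransGen_iff_eq_or_transGen.mp h).resolve_left hne.symm

lemma lt_irrefl (a : E) : ¬ M.lt a a :=
  M.acyclic a

lemma lt_of_lt_of_le {a b c : E} (h : M.lt a b) (h' : M.le b c) : M.lt a c :=
  h.trans_left h'

lemma lt_of_le_of_lt {a b c : E} (h : M.le a b) (h' : M.lt b c) : M.lt a c :=
  Relation.TransGen.trans_right h h'

lemma le_or_le_of_not_par {a b : E} (h : ¬ M.par a b) : M.le a b ∨ M.le b a := by
  unfold par at h
  tauto

lemma le_of_leSeq : ∀ (ps : List P) {a b : E}, M.leSeq ps a b → M.le a b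
  | [], _, _, h => h.elim
  | [_], _, _, h => M.le_of_pord h.2
  | _ :: p' :: ps, _, _, ⟨_, _, _, hag, hgh, hrest⟩ =>
    ((M.le_of_pord hag).tail (Or.inr hgh)).trans (le_of_leSeq (p' :: ps) hrest)

lemma not_mem_parP_of_leSeq {ps : List P} {p : P} {g f : E} (h : M.leSeq ps g f) :
    g ∉ M.ParP p f :=
  fun hg => hg.2.1 (M.le_of_leSeq ps h)

lemma not_mem_parP_of_leSeq_rev {ps : List P} {p : P} {g f : E} (h : M.leSeq ps f g) :
    g ∉ M.ParP p f :=
  fun hg => hg.2.2 (M.le_of_leSeq ps h)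

variable {M}

lemma pastP_eq_of_first_par {p : P} {e f : E} (hep : M.proc e = p) (hfp : M.proc f ≠ p)
    (hef : M.par e f) (hfirst : ∀ g ∈ M.ParP p f, M.pord e g) :
    M.PastP p e = M.PastP p f := by
  ext g
  constructor
  · rintro ⟨hgp, hge⟩
    refine ⟨hgp, M.lt_of_le_of_ne ?_ fun hgf => hfp (hgf ▸ hgp)⟩
    have hgf : ¬ M.par g f := fun hgf =>
      M.lt_irrefl g (M.lt_of_lt_of_le hge (M.le_of_pord (hfirst g ⟨hgp, hgf⟩)))
    refine (M.le_or_le_of_not_par hgf).resolve_right fun hfg => hef.2 ?_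
    exact M.le_of_lt (M.lt_of_le_of_lt hfg hge)
  · rintro ⟨hgp, hgf⟩
    refine ⟨hgp, ?_⟩
    rcases M.proc_total (hgp.trans hep.symm) with hge | heg
    · refine M.lt_of_le_of_ne (M.le_of_pord hge) ?_
      rintro rfl
      exact hef.1 (M.le_of_lt hgf)
    · exact absurd (M.le_of_lt (M.lt_of_le_of_lt (M.le_of_pord heg) hgf)) hef.1

lemma futP_eq_of_last_par {p : P} {e' f : E} (he'p : M.proc e' = p) (hfp : M.proc f ≠ p)
    (he'f : M.par e' f) (hlast : ∀ g ∈ M.ParP p f, M.pord g e') :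
    M.FutP p e' = M.FutP p f := by
  ext g
  constructor
  · rintro ⟨hgp, he'g⟩
    refine ⟨hgp, M.lt_of_le_of_ne ?_ fun hfg => hfp (hfg ▸ hgp)⟩
    have hgf : ¬ M.par g f := fun hgf =>
      M.lt_irrefl g (M.lt_of_le_of_lt (M.le_of_pord (hlast g ⟨hgp, hgf⟩)) he'g)
    refine (M.le_or_le_of_not_par hgf).resolve_left fun hgf_le => he'f.1 ?_
    exact M.le_of_lt (M.lt_of_lt_of_le he'g hgf_le)
  · rintro ⟨hgp, hfg⟩
    refine ⟨hgp, ?_⟩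
    rcases M.proc_total (hgp.trans he'p.symm) with hge' | he'g
    · exact absurd (M.le_of_lt (M.lt_of_lt_of_le hfg (M.le_of_pord hge'))) he'f.2
    · refine M.lt_of_le_of_ne (M.le_of_pord he'g) ?_
      rintro rfl
      exact he'f.2 (M.le_of_lt hfg)

end MSC

/-- conversely, if `Par_p(f) = [e,e']` is a non-empty interval, then
`Past_p(e) = Past_p(f)`, `Fut_p(e') = Fut_p(f)`, and no `last_𝕡(f)` (for `𝕡` from
`p` to `q`) nor `first_𝕡(f)` (for `𝕡` from `q` to `p`) lies in `[e,e']`. -/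
theorem stmt11 {P A E : Type} [Fintype E] (M : MSC P A E) (p q : P) (hpq : p ≠ q)
    (e e' f : E) (hep : M.proc e = p) (he'p : M.proc e' = p) (hfq : M.proc f = q)
    (hee' : M.pord e e')
    (hpar : M.ParP p f = M.Intv p e e') :
    M.PastP p e = M.PastP p f ∧ M.FutP p e' = M.FutP p f ∧
    (∀ ps : List P, ps.Nodup → ps.head? = some p → ps.getLast? = some q →
      ∀ g, M.leSeq ps g f → (∀ h, M.leSeq ps h f → M.pord h g) →
        g ∉ M.Intv p e e') ∧
    (∀ ps : List P, ps.Nodup → ps.head? = some q → ps.getLast? = some p →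
      ∀ g, M.leSeq ps f g → (∀ h, M.leSeq ps f h → M.pord g h) →
        g ∉ M.Intv p e e') := by
  have hfp : M.proc f ≠ p := hfq.trans_ne hpq.symm
  have hef : e ∈ M.ParP p f := hpar ▸ ⟨hep, .refl, hee'⟩
  have he'f : e' ∈ M.ParP p f := hpar ▸ ⟨he'p, hee', .refl⟩
  refine ⟨MSC.pastP_eq_of_first_par hep hfp hef.2 fun g hg => (hpar ▸ hg).2.1,
    MSC.futP_eq_of_last_par he'p hfp he'f.2 fun g hg => (hpar ▸ hg).2.2, ?_, ?_⟩
  · intro ps _ _ _ g hg _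
    exact hpar ▸ M.not_mem_parP_of_leSeq hg
  · intro ps _ _ _ g hg _
    exact hpar ▸ M.not_mem_parP_of_leSeq_rev hg
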